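/- Independence of the cyclic inequalities: let k ≥ 1 and define S(I) := min{ |I|, (2k+2) − |I|, k } for subsets I ⊆ {1,…,2k+2}. Then: (i) the cyclic inequality C_{2k+1}(k+1,k) is violated when applied to the singleton regions A_i = {i}, i = 1,…,2k+1: Σ_{i=1}^{2k+1} S({i+1,…,i+k+1}) − Σ_{i=1}^{2k+1} S({i+1,…,i+k}) − S({1,…,2k+1}) = −1 < 0 (cyclic windows with indices taken modulo 2k+1 inside {1,…,2k+1}); and (ii) for every integer l with 1 ≤ l < k and every family of pairwise disjoint nonempty subsets B_1,…,B_{2l+1} ⊆ {1,…,2k+2}, the coarse-grained entropies Ŝ(J) := S(∪_{j∈J} B_j), J ⊆ {1,…,2l+1}, satisfy the cyclic inequality Σ_{i=1}^{2l+1} Ŝ({i+1,…,i+l+1}) − Σ_{i=1}^{2l+1} Ŝ({i+1,…,i+l}) − Ŝ({1,…,2l+1}) ≥ 0 (cyclic windows modulo 2l+1). -/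

import Mathlib

/-- The cyclic window of `a` consecutive indices starting at `i` (mod `m`). -/
def cycWindow (m i a : ℕ) : Finset (Fin m) :=
  Finset.univ.filter fun j => ∃ t < a, (i + t) % m = (j : ℕ)

/-- The entropy function of the `(2k+2)`-party state `Σ_x |Ax⟩`:
`S(I) = min(|I|, (2k+2) − |I|, k)`. -/
noncomputable def Sspec (k : ℕ) (I : Finset (Fin (2 * k + 2))) : ℝ :=
  min (min (I.card : ℝ) ((2 * k + 2 : ℝ) - (I.card : ℝ))) (k : ℝ)

/-!
Write `F x = min (min x (2k+2-x)) k`, so that `S I = F |I|`. In (i) every window has entropy `k`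
and the union of all `2k+1` singletons has entropy `1`.

In (ii) let `c_j ≥ 1` be the block sizes, `N = ∑ c_j ≤ 2k+2`, and `V_x` the total size of the `l`
blocks starting at `x`. Each `(l+1)`-window is the complement of an `l`-window, so the inequality
reads `F N ≤ ∑ₓ g (V_x)` with `g y = F (N - y) - F y`. This gap `g` is antitone and odd about
`N/2`, and `V_x + V_{x+l} < N`, hence `g (V_x) + g (V_{x+l}) ≥ 0`. As `2l+1` is odd, splitting
off one term and pairing the others gives `g (V_{x₀}) ≤ ∑ₓ g (V_x)` for every `x₀`, and
`F N ≤ g (V_{x₀})` as soon as `V_{x₀} ≤ N - k - 2`. Otherwise every `V_x` lies in `[N-k-1, k]`,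
where `g y = N - 2y - [y = N-k-1]`, and `∑ₓ V_x = l N` together with `l < k` finishes the count.
-/

open Finset

def cappedEntropy (k : ℕ) (x : ℤ) : ℤ := min (min x (2 * k + 2 - x)) k

lemma Sspec_eq_cappedEntropy (k : ℕ) (I : Finset (Fin (2 * k + 2))) :
    Sspec k I = cappedEntropy k #I := by
  simp [Sspec, cappedEntropy, min_assoc]

def entropyGap (k : ℕ) (N y : ℤ) : ℤ := cappedEntropy k (N - y) - cappedEntropy k y

section Gap

variable {k : ℕ} {N : ℤ}

lemma entropyGap_antitone (hN : N ≤ 2 * k + 2) : Antitone (entropyGap k N) := by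
  intro x y _
  simp only [entropyGap, cappedEntropy]
  omega

lemma entropyGap_sub_left (y : ℤ) : entropyGap k N (N - y) = -entropyGap k N y := by
  simp [entropyGap]

lemma entropyGap_add_nonneg (hN : N ≤ 2 * k + 2) {x y : ℤ} (h : x + y ≤ N) :
    0 ≤ entropyGap k N x + entropyGap k N y := by
  have := entropyGap_antitone hN (show y ≤ N - x by omega)
  rw [entropyGap_sub_left] at this
  omega

lemma cappedEntropy_le_entropyGap {y : ℤ} (h : y + k + 2 ≤ N) :
    cappedEntropy k N ≤ entropyGap k N y := by
  simp only [entropyGap, cappedEntropy]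
  omega

lemma entropyGap_of_mem_Icc {y : ℤ} (h₁ : N - k - 1 ≤ y) (h₂ : y ≤ k) :
    entropyGap k N y = N - 2 * y - if y = N - k - 1 then 1 else 0 := by
  simp only [entropyGap, cappedEntropy]
  split_ifs <;> omega

end Gap

-- From here on `x + n` with `x : Fin m` and `n : ℕ` is addition modulo `m`.
open scoped Fin.CommRing

lemma single_le_sum_of_add_nonneg {l : ℕ} (f : Fin (2 * l + 1) → ℤ)
    (hf : ∀ x, 0 ≤ f x + f (x + l)) (x₀ : Fin (2 * l + 1)) :
    f x₀ ≤ ∑ x, f x := by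
  have hsplit : ∀ h : ℕ → ℤ,
      ∑ i ∈ range (2 * l + 1), h i = h 0 + ∑ j ∈ range l, (h (j + 1) + h (j + 1 + l)) := by
    intro h
    rw [sum_range_succ', two_mul, sum_range_add, sum_add_distrib, add_comm]
    congr 2
    exact sum_congr rfl fun j _ => by rw [add_comm l j, Nat.add_right_comm]
  have hrange := Fin.sum_univ_eq_sum_range (fun i : ℕ => f (x₀ + i)) (2 * l + 1)
  simp only [Fin.cast_val_eq_self] at hrange
  rw [← Equiv.sum_comp (Equiv.addLeft x₀), Equiv.coe_addLeft, hrange, hsplit, Nat.cast_zero,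
    add_zero, le_add_iff_nonneg_right]
  refine sum_nonneg fun j _ => ?_
  rw [Nat.cast_add (j + 1), ← add_assoc]
  exact hf _

section WindowSums

variable {k l : ℕ} {N : ℤ} (V : Fin (2 * l + 1) → ℤ)

lemma cappedEntropy_le_sum_entropyGap_of_forall_ge (hl : 0 < l) (hlk : l < k)
    (hV : ∀ x, l ≤ V x) (hpair : ∀ x, V x + V (x + l) < N) (hsum : ∑ x, V x = l * N)
    (hlarge : ∀ x, N - k - 1 ≤ V x) :
    cappedEntropy k N ≤ ∑ x, entropyGap k N (V x) := by
  have hsmall : ∀ x, V x ≤ k := fun x => by linarith [hpair x, hlarge (x + l)]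
  set b := #{x | V x = N - k - 1} with hb
  have hgap : ∑ x, entropyGap k N (V x) = N - b := by
    rw [sum_congr rfl fun x _ => entropyGap_of_mem_Icc (hlarge x) (hsmall x),
      sum_sub_distrib, sum_sub_distrib, ← mul_sum, hsum, hb, card_filter]
    simp only [sum_const, card_univ, Fintype.card_fin, nsmul_eq_mul, sum_boole]
    push_cast
    ring
  have hbm : b ≤ 2 * l + 1 := (card_le_univ _).trans_eq (Fintype.card_fin _)
  rw [hgap]
  rcases lt_trichotomy (N - k - 1) l with h | h | h
  · have hb0 : b = 0 := by
      rw [hb, card_eq_zero, filter_eq_empty_iff]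
      intro x _
      linarith [hV x]
    simp only [cappedEntropy, hb0]
    omega
  · have hlt : b < 2 * l + 1 := by
      obtain ⟨x, -, hx⟩ : ∃ x ∈ univ, (l : ℤ) < V x := by
        apply exists_lt_of_sum_lt
        rw [sum_const, card_univ, Fintype.card_fin, hsum, nsmul_eq_mul]
        push_cast
        have : (2 * l + 1 : ℤ) < N := by omega
        nlinarith
      refine (card_lt_card ?_).trans_eq (Fintype.card_fin _)
      exact filter_ssubset.2 ⟨x, mem_univ _, by omega⟩
    simp only [cappedEntropy]
    omega
  · simp only [cappedEntropy]
    omega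

lemma cappedEntropy_le_sum_entropyGap (hN : N ≤ 2 * k + 2) (hl : 0 < l) (hlk : l < k)
    (hV : ∀ x, l ≤ V x) (hpair : ∀ x, V x + V (x + l) < N) (hsum : ∑ x, V x = l * N) :
    cappedEntropy k N ≤ ∑ x, entropyGap k N (V x) := by
  by_cases hsmall : ∃ x₀, V x₀ + k + 2 ≤ N
  · obtain ⟨x₀, hx₀⟩ := hsmall
    exact (cappedEntropy_le_entropyGap hx₀).trans <| single_le_sum_of_add_nonneg _
      (fun x => entropyGap_add_nonneg hN (hpair x).le) x₀
  · push Not at hsmall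
    exact cappedEntropy_le_sum_entropyGap_of_forall_ge V hl hlk hV hpair hsum fun x => by
      linarith [hsmall x]

end WindowSums

section ArcSum

variable {m : ℕ} [NeZero m] (c : Fin m → ℕ)

def arcSum (a : ℕ) (x : Fin m) : ℕ := ∑ t ∈ range a, c (x + t)

lemma arcSum_add (a b : ℕ) (x : Fin m) :
    arcSum c (a + b) x = arcSum c a x + arcSum c b (x + a) := by
  simp only [arcSum, sum_range_add, Nat.cast_add, add_assoc]

lemma arcSum_succ (a : ℕ) (x : Fin m) : arcSum c (a + 1) x = arcSum c a x + c (x + a) :=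
  sum_range_succ _ _

lemma le_arcSum (hc : ∀ j, 1 ≤ c j) (a : ℕ) (x : Fin m) : a ≤ arcSum c a x := by
  simpa [arcSum] using card_nsmul_le_sum (range a) _ 1 fun t _ => hc (x + t)

lemma arcSum_self (x : Fin m) : arcSum c m x = ∑ j, c j := by
  have hrange := Fin.sum_univ_eq_sum_range (fun t : ℕ => c (x + t)) m
  simp only [Fin.cast_val_eq_self] at hrange
  rw [arcSum, ← hrange]
  exact Equiv.sum_comp (Equiv.addLeft x) c

lemma sum_arcSum (a : ℕ) : ∑ x, arcSum c a x = a * ∑ j, c j := by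
  have hshift (t : ℕ) : ∑ x, c (x + t) = ∑ j, c j := by
    simpa using Equiv.sum_comp (Equiv.addRight (t : Fin m)) c
  simp only [arcSum]
  rw [sum_comm, sum_congr rfl fun t _ => hshift t, sum_const, card_range, smul_eq_mul]

end ArcSum

theorem cappedEntropy_cyclic_arcSum {k l : ℕ} (hl : 0 < l) (hlk : l < k)
    (c : Fin (2 * l + 1) → ℕ) (hc : ∀ j, 1 ≤ c j) (hN : ∑ j, c j ≤ 2 * k + 2) :
    cappedEntropy k (∑ j, c j : ℕ) + ∑ x, cappedEntropy k (arcSum c l x)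
      ≤ ∑ x, cappedEntropy k (arcSum c (l + 1) x) := by
  set N : ℤ := ((∑ j, c j : ℕ) : ℤ)
  have hcompl (x : Fin (2 * l + 1)) :
      (arcSum c (l + 1) x : ℤ) = N - arcSum c l (x + (l + 1 : ℕ)) := by
    have hsplit := arcSum_add c (l + 1) l x
    rw [show l + 1 + l = 2 * l + 1 by ring, arcSum_self] at hsplit
    omega
  have hpair (x : Fin (2 * l + 1)) : (arcSum c l x : ℤ) + arcSum c l (x + l) < N := by
    have hsplit := arcSum_add c l (l + 1) x
    rw [show l + (l + 1) = 2 * l + 1 by ring, arcSum_self, arcSum_succ] at hsplit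
    have hlast := hc (x + l + l)
    omega
  have hsum : ∑ x, (arcSum c l x : ℤ) = l * N := by
    rw [← Nat.cast_sum, sum_arcSum, Nat.cast_mul]
  have hU : ∑ x, cappedEntropy k (arcSum c (l + 1) x)
      = ∑ x, cappedEntropy k (N - arcSum c l x) := by
    simp only [hcompl]
    exact Equiv.sum_comp (Equiv.addRight ((l + 1 : ℕ) : Fin (2 * l + 1)))
      fun y => cappedEntropy k (N - arcSum c l y)
  have hgap := cappedEntropy_le_sum_entropyGap (fun x => (arcSum c l x : ℤ)) (by omega) hl hlk
    (fun x => by exact_mod_cast le_arcSum c hc l x) hpair hsum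
  rw [hU]
  simp only [entropyGap, sum_sub_distrib] at hgap
  linarith

section CycWindow

variable {m : ℕ} [NeZero m]

lemma sum_range_natCast {M : Type*} [AddCommMonoid M] (G : Fin m → M) :
    ∑ i ∈ range m, G i = ∑ x, G x := by
  simpa using (Fin.sum_univ_eq_sum_range (fun i => G i) m).symm

lemma cycWindow_eq_image (i a : ℕ) :
    cycWindow m i a = (range a).image fun t => ((i + t : ℕ) : Fin m) := by
  ext j
  simp only [cycWindow, mem_filter, mem_univ, true_and, mem_image, mem_range, Fin.ext_iff,
    Fin.val_natCast]

lemma injOn_natCast_add {a : ℕ} (ha : a ≤ m) (i : ℕ) :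
    Set.InjOn (fun t => ((i + t : ℕ) : Fin m)) (range a) := by
  intro t ht t' ht' h
  simp only [coe_range, Set.mem_Iio] at ht ht'
  have hmod : t % m = t' % m := by simpa [Fin.ext_iff, Fin.val_natCast] using h
  rwa [Nat.mod_eq_of_lt (by omega), Nat.mod_eq_of_lt (by omega)] at hmod

lemma card_cycWindow {a : ℕ} (ha : a ≤ m) (i : ℕ) : #(cycWindow m i a) = a := by
  rw [cycWindow_eq_image, card_image_of_injOn (injOn_natCast_add ha i), card_range]

lemma card_biUnion_cycWindow {α : Type*} [DecidableEq α] (B : Fin m → Finset α)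
    (hB : ∀ j j', j ≠ j' → Disjoint (B j) (B j')) {a : ℕ} (ha : a ≤ m) (i : ℕ) :
    #((cycWindow m i a).biUnion B) = arcSum (fun j => #(B j)) a i := by
  rw [card_biUnion fun j _ j' _ h => hB j j' h, cycWindow_eq_image,
    sum_image (injOn_natCast_add ha i)]
  simp only [arcSum, Nat.cast_add]

end CycWindow

theorem cyclic_singletons_eq_neg_one {k : ℕ} (hk : 1 ≤ k) :
    (∑ i ∈ range (2 * k + 1),
        Sspec k ((cycWindow (2 * k + 1) i (k + 1)).image (Fin.castLE (Nat.le_succ _))))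
      - (∑ i ∈ range (2 * k + 1),
        Sspec k ((cycWindow (2 * k + 1) i k).image (Fin.castLE (Nat.le_succ _))))
      - Sspec k ((univ : Finset (Fin (2 * k + 1))).image (Fin.castLE (Nat.le_succ _)))
      = -1 := by
  have hS (i a : ℕ) (ha : a ≤ 2 * k + 1) :
      Sspec k ((cycWindow (2 * k + 1) i a).image (Fin.castLE (Nat.le_succ _)))
        = cappedEntropy k a := by
    rw [Sspec_eq_cappedEntropy, card_image_of_injective _ (Fin.castLE_injective _),
      card_cycWindow ha]
  have hlong : cappedEntropy k (k + 1 : ℕ) = k := by simp only [cappedEntropy]; omega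
  have hshort : cappedEntropy k k = k := by simp only [cappedEntropy]; omega
  have hall : cappedEntropy k (2 * k + 1 : ℕ) = 1 := by simp only [cappedEntropy]; omega
  rw [sum_congr rfl fun i _ => hS i (k + 1) (by omega), sum_congr rfl fun i _ => hS i k (by omega),
    Sspec_eq_cappedEntropy, card_image_of_injective _ (Fin.castLE_injective _), card_univ,
    Fintype.card_fin, hlong, hshort, hall]
  simp

theorem cyclic_coarseGrained_nonneg {k l : ℕ} (hl : 0 < l) (hlk : l < k)
    (B : Fin (2 * l + 1) → Finset (Fin (2 * k + 2))) (hBne : ∀ j, (B j).Nonempty)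
    (hBdis : ∀ j j', j ≠ j' → Disjoint (B j) (B j')) :
    0 ≤ (∑ i ∈ range (2 * l + 1), Sspec k ((cycWindow (2 * l + 1) i (l + 1)).biUnion B))
      - (∑ i ∈ range (2 * l + 1), Sspec k ((cycWindow (2 * l + 1) i l).biUnion B))
      - Sspec k ((univ : Finset (Fin (2 * l + 1))).biUnion B) := by
  set c : Fin (2 * l + 1) → ℕ := fun j => #(B j)
  have hS (a : ℕ) (ha : a ≤ 2 * l + 1) :
      ∑ i ∈ range (2 * l + 1), Sspec k ((cycWindow (2 * l + 1) i a).biUnion B)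
        = ∑ x, (cappedEntropy k (arcSum c a x) : ℝ) := by
    rw [← sum_range_natCast]
    exact sum_congr rfl fun i _ => by
      rw [Sspec_eq_cappedEntropy, card_biUnion_cycWindow B hBdis ha]
  have htot : #(univ.biUnion B) = ∑ j, c j := card_biUnion fun j _ j' _ h => hBdis j j' h
  have hN : ∑ j, c j ≤ 2 * k + 2 := htot ▸ (card_le_univ _).trans_eq (Fintype.card_fin _)
  have key := cappedEntropy_cyclic_arcSum hl hlk c (fun j => card_pos.2 (hBne j)) hN
  rw [hS (l + 1) (by omega), hS l (by omega), Sspec_eq_cappedEntropy, htot, sub_sub, sub_nonneg,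
    add_comm]
  exact_mod_cast key

/-- Independence of the cyclic inequalities: with
`S(I) = min(|I|, 2k+2−|I|, k)`, (i) the cyclic inequality `C_{2k+1}(k+1,k)` applied to
the singleton regions `{1},…,{2k+1}` is violated (the cyclic combination equals `−1`),
while (ii) for every `1 ≤ l < k` and all pairwise disjoint nonempty blocks
`B_1,…,B_{2l+1} ⊆ {1,…,2k+2}`, the coarse-grained entropies satisfy the cyclic
inequality `C_{2l+1}(l+1,l) ≥ 0`. -/
theorem stmt18 (k : ℕ) (hk : 1 ≤ k) :
    ((∑ i ∈ Finset.range (2 * k + 1),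
        Sspec k ((cycWindow (2 * k + 1) i (k + 1)).image (Fin.castLE (by omega))))
      - (∑ i ∈ Finset.range (2 * k + 1),
        Sspec k ((cycWindow (2 * k + 1) i k).image (Fin.castLE (by omega))))
      - Sspec k ((Finset.univ : Finset (Fin (2 * k + 1))).image (Fin.castLE (by omega)))
      = -1) ∧
    (∀ l : ℕ, 1 ≤ l → l < k → ∀ B : Fin (2 * l + 1) → Finset (Fin (2 * k + 2)),
      (∀ j, (B j).Nonempty) → (∀ j j', j ≠ j' → Disjoint (B j) (B j')) →
      0 ≤ (∑ i ∈ Finset.range (2 * l + 1),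
            Sspec k ((cycWindow (2 * l + 1) i (l + 1)).biUnion B))
          - (∑ i ∈ Finset.range (2 * l + 1),
            Sspec k ((cycWindow (2 * l + 1) i l).biUnion B))
          - Sspec k ((Finset.univ : Finset (Fin (2 * l + 1))).biUnion B)) :=
  ⟨cyclic_singletons_eq_neg_one hk, fun _ hl hlk B hBne hBdis =>
    cyclic_coarseGrained_nonneg hl hlk B hBne hBdis⟩
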